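/- arXiv:2209.05979 — 3 statements merged into one kernel-verified Lean document; each statement's English description precedes it below -/
import Mathlib

section
/- Let V_N : S → [0,∞] be the indicator function of 𝕊, and for k = N−1, N−2, …, 0 define recursively V_k(s) = ∫_𝕊 V_{k+1}(s') κ_k(s, ds') (integral over the safe set 𝕊). Then for every k and every s ∈ S, V_k(s) equals the probability that s_{k+1}, …, s_N all lie in 𝕊 for the Markov chain with transition kernels κ_k, …, κ_{N−1} started at s_k = s; in particular, V_0(s₀) equals the MWPS from s₀. -/
open MeasureTheory ProbabilityTheory
open scoped ENNReal

/-!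
Split off the last transition of the trajectory law: integrating `V_{k+n+1}` of the final state
over the safe trajectories of length `n + 1` is the same as integrating
`∫_𝕊 V_{k+n+1} dκ_{k+n}(s_{k+n}, ·) = V_{k+n}(s_{k+n})` over the safe trajectories of length `n`.
Descending in `n` collapses the integral over safe trajectories of length `N - k` of `V_N` of the
final state to `V_k(s)`; and since `V_N = 1` on `𝕊`, where every safe trajectory ends, that integral
is the probability of the safe set of trajectories.
-/

/-- The joint law of the trajectory `(s_k, s_{k+1}, …, s_{k+n})` of the Markov chain with
transition kernels `κ_k, κ_{k+1}, …` started deterministically at `s_k = s`, obtained by the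
iterated composition-product of the kernels (i.e. `s_{j+1} ∼ κ_j(s_j, ·)`).  The trajectory is
recorded as a function `Fin (n+1) → S`, index `i` corresponding to time `k + i`. -/
noncomputable def trajLaw {S : Type*} [MeasurableSpace S] (κ : ℕ → Kernel S S) (k : ℕ) (s : S) :
    (n : ℕ) → Measure (Fin (n + 1) → S)
  | 0 => Measure.dirac (fun _ => s)
  | n + 1 =>
      (trajLaw κ k s n).bind fun p => ((κ (k + n)) (p (Fin.last n))).map (fun x => Fin.snoc p x)

theorem measurable_snoc {S : Type*} [MeasurableSpace S] (n : ℕ) :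
    Measurable fun q : (Fin (n + 1) → S) × S => (Fin.snoc q.1 q.2 : Fin (n + 2) → S) := by
  refine measurable_pi_lambda _ fun i => Fin.lastCases ?_ (fun j => ?_) i
  · simpa only [Fin.snoc_last] using measurable_snd
  · simp only [Fin.snoc_castSucc]
    exact (measurable_pi_apply j).comp measurable_fst

theorem ProbabilityTheory.Kernel.measurable_map_snoc {S : Type*} [MeasurableSpace S] {n : ℕ}
    (η : Kernel (Fin (n + 1) → S) S) [IsSFiniteKernel η] :
    Measurable fun p => (η p).map fun x => (Fin.snoc p x : Fin (n + 2) → S) := by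
  refine Measure.measurable_of_measurable_coe _ fun B hB => ?_
  convert Kernel.measurable_kernel_prodMk_left (κ := η) (measurable_snoc n hB) using 1
  funext p
  exact Measure.map_apply ((measurable_snoc n).comp measurable_prodMk_left) hB

section TrajLaw

variable {S : Type*}

def safeTraj (𝕊 : Set S) (n : ℕ) : Set (Fin (n + 1) → S) :=
  {p | ∀ i, i ≠ 0 → p i ∈ 𝕊}

theorem snoc_mem_safeTraj_iff {𝕊 : Set S} {n : ℕ} {p : Fin (n + 1) → S} {x : S} :
    (Fin.snoc p x : Fin (n + 2) → S) ∈ safeTraj 𝕊 (n + 1) ↔ p ∈ safeTraj 𝕊 n ∧ x ∈ 𝕊 := by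
  simp [safeTraj, Fin.forall_fin_succ', Fin.snoc_castSucc, Fin.snoc_last]

variable [MeasurableSpace S]

theorem measurableSet_safeTraj {𝕊 : Set S} (h𝕊 : MeasurableSet 𝕊) (n : ℕ) :
    MeasurableSet (safeTraj 𝕊 n) := by
  simp only [safeTraj, Set.ofPred_forall]
  exact .iInter fun i => .iInter fun _ => measurable_pi_apply i h𝕊

theorem lintegral_trajLaw_succ (κ : ℕ → Kernel S S) [∀ j, IsSFiniteKernel (κ j)] (k : ℕ) (s : S)
    (n : ℕ) {g : (Fin (n + 2) → S) → ℝ≥0∞} (hg : Measurable g) :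
    ∫⁻ p, g p ∂trajLaw κ k s (n + 1)
      = ∫⁻ p, ∫⁻ x, g (Fin.snoc p x) ∂κ (k + n) (p (Fin.last n)) ∂trajLaw κ k s n := by
  have hη : Measurable fun p : Fin (n + 1) → S =>
      (κ (k + n) (p (Fin.last n))).map fun x => (Fin.snoc p x : Fin (n + 2) → S) :=
    ((κ (k + n)).comap _ (measurable_pi_apply (Fin.last n))).measurable_map_snoc
  rw [trajLaw, Measure.lintegral_bind hη.aemeasurable hg.aemeasurable]
  exact lintegral_congr fun p => lintegral_map hg ((measurable_snoc n).comp measurable_prodMk_left)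

theorem setLIntegral_safeTraj_succ (κ : ℕ → Kernel S S) [∀ j, IsSFiniteKernel (κ j)] (k : ℕ)
    (s : S) (n : ℕ) {𝕊 : Set S} (h𝕊 : MeasurableSet 𝕊) {f : S → ℝ≥0∞} (hf : Measurable f) :
    ∫⁻ p in safeTraj 𝕊 (n + 1), f (p (Fin.last (n + 1))) ∂trajLaw κ k s (n + 1)
      = ∫⁻ p in safeTraj 𝕊 n, ∫⁻ x in 𝕊, f x ∂κ (k + n) (p (Fin.last n)) ∂trajLaw κ k s n := by
  have hsnoc (p : Fin (n + 1) → S) (x : S) :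
      (safeTraj 𝕊 (n + 1)).indicator (fun q => f (q (Fin.last (n + 1)))) (Fin.snoc p x)
        = (safeTraj 𝕊 n).indicator (fun _ => 𝕊.indicator f x) p := by
    by_cases hp : p ∈ safeTraj 𝕊 n <;> by_cases hx : x ∈ 𝕊 <;>
      simp [Set.indicator, snoc_mem_safeTraj_iff, hp, hx]
  rw [← lintegral_indicator (measurableSet_safeTraj h𝕊 _),
    ← lintegral_indicator (measurableSet_safeTraj h𝕊 _),
    lintegral_trajLaw_succ κ k s n (Measurable.indicator (by fun_prop)
      (measurableSet_safeTraj h𝕊 _))]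
  refine lintegral_congr fun p => ?_
  simp_rw [hsnoc]
  by_cases hp : p ∈ safeTraj 𝕊 n <;> simp [hp, lintegral_indicator h𝕊]

end TrajLaw

section BackwardRecursion

variable {S : Type*} [MeasurableSpace S] {κ : ℕ → Kernel S S} {𝕊 : Set S} {V : ℕ → S → ℝ≥0∞}
  {N : ℕ}

theorem measurable_of_backward_recursion (h𝕊 : MeasurableSet 𝕊) (hVN : Measurable (V N))
    (hVrec : ∀ k < N, ∀ s, V k s = ∫⁻ s' in 𝕊, V (k + 1) s' ∂(κ k s)) :
    ∀ k ≤ N, Measurable (V k) := fun _ hk =>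
  Nat.decreasingInduction (fun j hj hVj => by
    rw [funext (hVrec j hj)]
    exact hVj.lintegral_kernel (κ := (κ j).restrict h𝕊)) hVN hk

theorem setLIntegral_safeTraj_eq_of_backward_recursion [∀ j, IsSFiniteKernel (κ j)]
    (h𝕊 : MeasurableSet 𝕊) (hV : ∀ k ≤ N, Measurable (V k))
    (hVrec : ∀ k < N, ∀ s, V k s = ∫⁻ s' in 𝕊, V (k + 1) s' ∂(κ k s)) (n : ℕ) :
    ∀ k, k + n ≤ N → ∀ s,
      ∫⁻ p in safeTraj 𝕊 n, V (k + n) (p (Fin.last n)) ∂trajLaw κ k s n = V k s := by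
  induction n with
  | zero =>
    intro k hk s
    have hsafe : safeTraj 𝕊 0 = Set.univ :=
      Set.eq_univ_of_forall fun _ i hi => absurd (Fin.fin_one_eq_zero i) hi
    rw [hsafe, Measure.restrict_univ, trajLaw]
    exact lintegral_dirac' _ ((hV k hk).comp (measurable_pi_apply (Fin.last 0)))
  | succ n ih =>
    intro k hk s
    rw [setLIntegral_safeTraj_succ κ k s n h𝕊 (hV _ hk), ← ih k (by omega) s]
    exact setLIntegral_congr_fun (measurableSet_safeTraj h𝕊 n) fun p _ =>
      (hVrec (k + n) (by omega) _).symm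

end BackwardRecursion

theorem backward_recursion_eq_MWPS_general
    {S : Type*} [MeasurableSpace S] (N : ℕ)
    (κ : ℕ → Kernel S S) (hκ : ∀ k, IsMarkovKernel (κ k))
    (𝕊 : Set S) (h𝕊 : MeasurableSet 𝕊)
    (V : ℕ → S → ℝ≥0∞)
    (hVN : ∀ s, V N s = Set.indicator 𝕊 1 s)
    (hVrec : ∀ k < N, ∀ s, V k s = ∫⁻ s' in 𝕊, V (k + 1) s' ∂(κ k s)) :
    ∀ k < N, ∀ s : S,
      V k s = trajLaw κ k s (N - k) {p : Fin (N - k + 1) → S | ∀ i, i ≠ 0 → p i ∈ 𝕊} := by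
  intro k hk s
  have hV := measurable_of_backward_recursion h𝕊
    (by simpa only [funext hVN] using measurable_one.indicator h𝕊) hVrec
  have hvalue := setLIntegral_safeTraj_eq_of_backward_recursion h𝕊 hV hVrec (N - k) k
    (by omega) s
  rw [Nat.add_sub_cancel' hk.le] at hvalue
  rw [← hvalue, ← setLIntegral_one]
  refine setLIntegral_congr_fun (measurableSet_safeTraj h𝕊 _) fun p hp => ?_
  have hlast : p (Fin.last (N - k)) ∈ 𝕊 :=
    hp _ (Fin.val_ne_zero_iff.mp (by rw [Fin.val_last]; omega))
  rw [hVN, Set.indicator_of_mem hlast, Pi.one_apply]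

/-- If `V_N` is the indicator of the safe set `𝕊` and, backwards for
`k = N-1, …, 0`, `V_k(s) = ∫_𝕊 V_{k+1}(s') κ_k(s, ds')`, then for every `k < N` and every `s`,
`V_k(s)` equals the probability that `s_{k+1}, …, s_N` all lie in `𝕊` for the Markov chain with
kernels `κ_k, …, κ_{N-1}` started at `s_k = s`; in particular `V_0(s₀)` is the mission-wide
probability of safety from `s₀`. -/
theorem backward_recursion_eq_MWPS
    {S : Type*} [MeasurableSpace S] (N : ℕ) (hN : 1 ≤ N)
    (κ : ℕ → Kernel S S) (hκ : ∀ k, IsMarkovKernel (κ k))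
    (𝕊 : Set S) (h𝕊 : MeasurableSet 𝕊)
    (V : ℕ → S → ℝ≥0∞)
    (hVN : ∀ s, V N s = Set.indicator 𝕊 1 s)
    (hVrec : ∀ k < N, ∀ s, V k s = ∫⁻ s' in 𝕊, V (k + 1) s' ∂(κ k s)) :
    ∀ k < N, ∀ s : S,
      V k s = trajLaw κ k s (N - k) {p : Fin (N - k + 1) → S | ∀ i, i ≠ 0 → p i ∈ 𝕊} :=
  backward_recursion_eq_MWPS_general N κ hκ 𝕊 h𝕊 V hVN hVrec
end

section
/- Define the Bellman (dynamic programming) value functions by J_N = g and, for k = N−1, …, 0, J_k(s) = ⨅_{a ∈ A} [ ℓ(s, a) + ∫ J_{k+1}(s') κ((s, a), ds') ], and assume each J_k is measurable. Then for every measurable policy sequence π = (π_0, …, π_{N−1}), every k ∈ {0, …, N}, and every s ∈ S, the policy value dominates the DP value: W^π_k(s) ≥ J_k(s). In particular, ⨅_π W^π_0(s₀) ≥ J_0(s₀) for every s₀ ∈ S. -/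
open MeasureTheory ProbabilityTheory
open scoped ENNReal

/-! Backward induction from `N`: once `J (k+1) ≤ W (k+1)`, the infimum defining `J k s` is at
most its term at the action `π k s`, which is at most `W k s` by monotonicity of the integral. -/

section

variable {S A : Type*} [MeasurableSpace S] [MeasurableSpace A]
  (κ : Kernel (S × A) S) (ℓ : S × A → ℝ≥0∞)

theorem iInf_add_lintegral_le_add_lintegral_of_le {V W : S → ℝ≥0∞} (hVW : V ≤ W)
    (s : S) (a : A) :
    ⨅ b : A, (ℓ (s, b) + ∫⁻ s', V s' ∂(κ (s, b))) ≤ ℓ (s, a) + ∫⁻ s', W s' ∂(κ (s, a)) :=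
  (iInf_le _ a).trans (add_le_add_right (lintegral_mono hVW) _)

theorem bellman_value_le_policy_value {N : ℕ} {J W : ℕ → S → ℝ≥0∞} (π : ℕ → S → A)
    (hN : J N ≤ W N)
    (hJrec : ∀ k < N, ∀ s,
      J k s = ⨅ a : A, (ℓ (s, a) + ∫⁻ s', J (k + 1) s' ∂(κ (s, a))))
    (hWrec : ∀ k < N, ∀ s, W k s = ℓ (s, π k s) + ∫⁻ s', W (k + 1) s' ∂(κ (s, π k s)))
    {k : ℕ} (hk : k ≤ N) : J k ≤ W k := by
  induction hk using Nat.decreasingInduction with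
  | self => exact hN
  | of_succ k hk ih =>
    intro s
    rw [hJrec k hk, hWrec k hk]
    exact iInf_add_lintegral_le_add_lintegral_of_le κ ℓ ih s (π k s)

end

theorem bellman_values_lower_bound_policy_values_general
    {S A : Type*} [MeasurableSpace S] [MeasurableSpace A]
    (κ : Kernel (S × A) S) (N : ℕ)
    (ℓ : S × A → ℝ≥0∞)
    (g : S → ℝ≥0∞)
    (J : ℕ → S → ℝ≥0∞)
    (hJN : ∀ s, J N s = g s)
    (hJrec : ∀ k < N, ∀ s,
      J k s = ⨅ a : A, (ℓ (s, a) + ∫⁻ s', J (k + 1) s' ∂(κ (s, a)))) :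
    (∀ π : ℕ → S → A, (∀ k, Measurable (π k)) →
      ∀ W : ℕ → S → ℝ≥0∞, (∀ s, W N s = g s) →
        (∀ k < N, ∀ s, W k s = ℓ (s, π k s) + ∫⁻ s', W (k + 1) s' ∂(κ (s, π k s))) →
        ∀ k ≤ N, ∀ s : S, J k s ≤ W k s) ∧
    (∀ s₀ : S,
      J 0 s₀ ≤
        ⨅ (π : ℕ → S → A) (_ : ∀ k, Measurable (π k)) (W : ℕ → S → ℝ≥0∞)
          (_ : ∀ s, W N s = g s)
          (_ : ∀ k < N, ∀ s, W k s = ℓ (s, π k s) + ∫⁻ s', W (k + 1) s' ∂(κ (s, π k s))),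
          W 0 s₀) := by
  have dominates : ∀ π : ℕ → S → A, ∀ W : ℕ → S → ℝ≥0∞, (∀ s, W N s = g s) →
      (∀ k < N, ∀ s, W k s = ℓ (s, π k s) + ∫⁻ s', W (k + 1) s' ∂(κ (s, π k s))) →
      ∀ k ≤ N, ∀ s : S, J k s ≤ W k s :=
    fun π W hWN hWrec _ hk =>
      bellman_value_le_policy_value κ ℓ π (fun s => (hJN s).trans_le (hWN s).ge) hJrec hWrec hk
  refine ⟨fun π _ => dominates π, fun s₀ => ?_⟩
  simp only [le_iInf_iff]
  exact fun π _ W hWN hWrec => dominates π W hWN hWrec 0 N.zero_le s₀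

/-- Let the Bellman value functions be `J_N = g` and
`J_k(s) = ⨅_{a ∈ A} [ℓ(s,a) + ∫ J_{k+1}(s') κ((s,a), ds')]` for `k = N-1, …, 0`, each `J_k`
measurable.  Then for every measurable policy sequence `π`, the associated policy value
functions `W^π` (defined backwards by `W^π_N = g`,
`W^π_k(s) = ℓ(s, π_k(s)) + ∫ W^π_{k+1}(s') κ((s, π_k(s)), ds')`) dominate the DP values:
`W^π_k(s) ≥ J_k(s)` for all `k ≤ N` and `s`.  In particular,
`⨅_π W^π_0(s₀) ≥ J_0(s₀)` for every `s₀`. -/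
theorem bellman_values_lower_bound_policy_values
    {S A : Type*} [MeasurableSpace S] [MeasurableSpace A] [Nonempty A]
    (κ : Kernel (S × A) S) [IsMarkovKernel κ] (N : ℕ)
    (ℓ : S × A → ℝ≥0∞) (hℓ : Measurable ℓ)
    (g : S → ℝ≥0∞) (hg : Measurable g)
    (J : ℕ → S → ℝ≥0∞)
    (hJN : ∀ s, J N s = g s)
    (hJrec : ∀ k < N, ∀ s,
      J k s = ⨅ a : A, (ℓ (s, a) + ∫⁻ s', J (k + 1) s' ∂(κ (s, a))))
    (hJmeas : ∀ k, Measurable (J k)) :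
    (∀ π : ℕ → S → A, (∀ k, Measurable (π k)) →
      ∀ W : ℕ → S → ℝ≥0∞, (∀ s, W N s = g s) →
        (∀ k < N, ∀ s, W k s = ℓ (s, π k s) + ∫⁻ s', W (k + 1) s' ∂(κ (s, π k s))) →
        ∀ k ≤ N, ∀ s : S, J k s ≤ W k s) ∧
    (∀ s₀ : S,
      J 0 s₀ ≤
        ⨅ (π : ℕ → S → A) (_ : ∀ k, Measurable (π k)) (W : ℕ → S → ℝ≥0∞)
          (_ : ∀ s, W N s = g s)
          (_ : ∀ k < N, ∀ s, W k s = ℓ (s, π k s) + ∫⁻ s', W (k + 1) s' ∂(κ (s, π k s))),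
          W 0 s₀) :=
  bellman_values_lower_bound_policy_values_general κ N ℓ g J hJN hJrec
end

section
/- Define the Bellman value functions by J_N = g and J_k(s) = ⨅_{a ∈ A} [ ℓ(s, a) + ∫ J_{k+1}(s') κ((s, a), ds') ] for k = N−1, …, 0, and assume each J_k is measurable. Suppose that for each k there exists a measurable selector π*_k : S → A attaining the infimum, i.e. ℓ(s, π*_k(s)) + ∫ J_{k+1}(s') κ((s, π*_k(s)), ds') = J_k(s) for all s ∈ S. Then the policy sequence π* = (π*_0, …, π*_{N−1}) satisfies W^{π*}_k = J_k for every k; consequently, for every s₀ ∈ S, the infimum of W^π_0(s₀) over all measurable policy sequences π equals J_0(s₀), and π* is an optimal policy sequence. -/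
open MeasureTheory ProbabilityTheory
open scoped ENNReal

/-! Both claims are backward inductions from the terminal time `N`. The policy recursion of `π⋆`
and the Bellman recursion for `J` coincide once the infimum is replaced by its attaining selector,
so `W^{π⋆}` and `J` solve the same recursion with the same terminal value. For any other policy,
the infimum over actions lies below the action the policy chooses, and integration is monotone, so
`J_k ≤ W^π_k` propagates from `k + 1` to `k`. -/

section

variable {S A : Type*} [MeasurableSpace S] [MeasurableSpace A]
  (κ : Kernel (S × A) S) (ℓ : S × A → ℝ≥0∞)

noncomputable def qValue (V : S → ℝ≥0∞) (s : S) (a : A) : ℝ≥0∞ :=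
  ℓ (s, a) + ∫⁻ s', V s' ∂(κ (s, a))

variable {κ ℓ}

theorem qValue_mono {V V' : S → ℝ≥0∞} (h : V ≤ V') (s : S) (a : A) :
    qValue κ ℓ V s a ≤ qValue κ ℓ V' s a :=
  add_le_add le_rfl (lintegral_mono h)

theorem policyValue_unique {N : ℕ} {π : ℕ → S → A} {W V : ℕ → S → ℝ≥0∞}
    (hN : W N = V N)
    (hW : ∀ k < N, ∀ s, W k s = qValue κ ℓ (W (k + 1)) s (π k s))
    (hV : ∀ k < N, ∀ s, V k s = qValue κ ℓ (V (k + 1)) s (π k s)) {k : ℕ} (hk : k ≤ N) :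
    W k = V k := by
  induction hk using Nat.decreasingInduction with
  | self => exact hN
  | of_succ k hk ih => funext s; rw [hW k hk, hV k hk, ih]

theorem bellmanValue_le_policyValue {N : ℕ} {π : ℕ → S → A} {J W : ℕ → S → ℝ≥0∞}
    (hN : J N ≤ W N)
    (hJ : ∀ k < N, ∀ s, J k s = ⨅ a, qValue κ ℓ (J (k + 1)) s a)
    (hW : ∀ k < N, ∀ s, W k s = qValue κ ℓ (W (k + 1)) s (π k s)) {k : ℕ} (hk : k ≤ N) :
    J k ≤ W k := by
  induction hk using Nat.decreasingInduction with
  | self => exact hN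
  | of_succ k hk ih =>
    intro s
    calc J k s = ⨅ a, qValue κ ℓ (J (k + 1)) s a := hJ k hk s
      _ ≤ qValue κ ℓ (J (k + 1)) s (π k s) := iInf_le _ _
      _ ≤ qValue κ ℓ (W (k + 1)) s (π k s) := qValue_mono ih _ _
      _ = W k s := (hW k hk s).symm

end

theorem bellman_selector_is_optimal_general
    {S A : Type*} [MeasurableSpace S] [MeasurableSpace A]
    (κ : Kernel (S × A) S) (N : ℕ)
    (ℓ : S × A → ℝ≥0∞)
    (g : S → ℝ≥0∞)
    (J : ℕ → S → ℝ≥0∞)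
    (hJN : ∀ s, J N s = g s)
    (hJrec : ∀ k < N, ∀ s,
      J k s = ⨅ a : A, (ℓ (s, a) + ∫⁻ s', J (k + 1) s' ∂(κ (s, a))))
    (πstar : ℕ → S → A) (hπstar : ∀ k, Measurable (πstar k))
    (hsel : ∀ k < N, ∀ s,
      ℓ (s, πstar k s) + ∫⁻ s', J (k + 1) s' ∂(κ (s, πstar k s)) = J k s) :
    (∀ W : ℕ → S → ℝ≥0∞, (∀ s, W N s = g s) →
      (∀ k < N, ∀ s, W k s = ℓ (s, πstar k s) + ∫⁻ s', W (k + 1) s' ∂(κ (s, πstar k s))) →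
      ∀ k ≤ N, ∀ s : S, W k s = J k s) ∧
    (∀ s₀ : S,
      (⨅ (π : ℕ → S → A) (_ : ∀ k, Measurable (π k)) (W : ℕ → S → ℝ≥0∞)
          (_ : ∀ s, W N s = g s)
          (_ : ∀ k < N, ∀ s, W k s = ℓ (s, π k s) + ∫⁻ s', W (k + 1) s' ∂(κ (s, π k s))),
          W 0 s₀) = J 0 s₀) := by
  have hJstar : ∀ k < N, ∀ s, J k s = qValue κ ℓ (J (k + 1)) s (πstar k s) :=
    fun k hk s => (hsel k hk s).symm
  refine ⟨fun W hWN hWrec k hk s => ?_, fun s₀ => le_antisymm ?_ ?_⟩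
  · exact congrFun (policyValue_unique (funext fun s => (hWN s).trans (hJN s).symm)
      hWrec hJstar hk) s
  · exact iInf₂_le_of_le πstar hπstar <| iInf₂_le_of_le J hJN <| iInf_le_of_le hJstar le_rfl
  · refine le_iInf₂ fun π _ => le_iInf₂ fun W hWN => le_iInf fun hWrec => ?_
    exact bellmanValue_le_policyValue (fun s => ((hJN s).trans (hWN s).symm).le) hJrec hWrec
      (Nat.zero_le N) s₀

/-- Let the Bellman value functions be `J_N = g` and
`J_k(s) = ⨅_{a ∈ A} [ℓ(s,a) + ∫ J_{k+1}(s') κ((s,a), ds')]` for `k = N-1, …, 0`, each `J_k`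
measurable.  Suppose for each `k` there is a measurable selector `π⋆_k` attaining the infimum:
`ℓ(s, π⋆_k(s)) + ∫ J_{k+1}(s') κ((s, π⋆_k(s)), ds') = J_k(s)` for all `s`.  Then the policy
value functions `W^{π⋆}` of `π⋆` (defined backwards by `W_N = g`,
`W_k(s) = ℓ(s, π⋆_k(s)) + ∫ W_{k+1}(s') κ((s, π⋆_k(s)), ds')`) coincide with `J_k` for every
`k ≤ N`; consequently, for every `s₀`, the infimum of `W^π_0(s₀)` over all measurable policy
sequences `π` equals `J_0(s₀)`, i.e. `π⋆` is an optimal policy sequence. -/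
theorem bellman_selector_is_optimal
    {S A : Type*} [MeasurableSpace S] [MeasurableSpace A] [Nonempty A]
    (κ : Kernel (S × A) S) [IsMarkovKernel κ] (N : ℕ)
    (ℓ : S × A → ℝ≥0∞) (hℓ : Measurable ℓ)
    (g : S → ℝ≥0∞) (hg : Measurable g)
    (J : ℕ → S → ℝ≥0∞)
    (hJN : ∀ s, J N s = g s)
    (hJrec : ∀ k < N, ∀ s,
      J k s = ⨅ a : A, (ℓ (s, a) + ∫⁻ s', J (k + 1) s' ∂(κ (s, a))))
    (hJmeas : ∀ k, Measurable (J k))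
    (πstar : ℕ → S → A) (hπstar : ∀ k, Measurable (πstar k))
    (hsel : ∀ k < N, ∀ s,
      ℓ (s, πstar k s) + ∫⁻ s', J (k + 1) s' ∂(κ (s, πstar k s)) = J k s) :
    (∀ W : ℕ → S → ℝ≥0∞, (∀ s, W N s = g s) →
      (∀ k < N, ∀ s, W k s = ℓ (s, πstar k s) + ∫⁻ s', W (k + 1) s' ∂(κ (s, πstar k s))) →
      ∀ k ≤ N, ∀ s : S, W k s = J k s) ∧
    (∀ s₀ : S,
      (⨅ (π : ℕ → S → A) (_ : ∀ k, Measurable (π k)) (W : ℕ → S → ℝ≥0∞)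
          (_ : ∀ s, W N s = g s)
          (_ : ∀ k < N, ∀ s, W k s = ℓ (s, π k s) + ∫⁻ s', W (k + 1) s' ∂(κ (s, π k s))),
          W 0 s₀) = J 0 s₀) :=
  bellman_selector_is_optimal_general κ N ℓ g J hJN hJrec πstar hπstar hsel
end
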